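/- arXiv:1012.1518 — 3 statements merged into one kernel-verified Lean document; each statement's English description precedes it below -/
import Mathlib

section
/- Dirichlet's divisor asymptotic: Σ_{n ≤ x} d(n) = x log x + (2γ - 1)x + O(√x) as x → ∞, where γ is the Euler–Mascheroni constant. -/
/-!
The divisor sum counts the lattice points `(a, b)` with `a, b ≥ 1` and `ab ≤ x`. By Dirichlet's
hyperbola method each such point has `a ≤ √x` or `b ≤ √x`, and both happen exactly on the square
`[1, N]²` with `N = ⌊√x⌋`, so `Σ_{n ≤ x} d(n) = 2 Σ_{a ≤ N} ⌊x / a⌋ - N²`. Dropping the floors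
costs `O(N)`, and `Σ_{a ≤ N} 1 / a = log N + γ + O(1 / N)` turns `2x Σ_{a ≤ N} 1 / a - N²` into
`x log x + (2γ - 1) x + O(√x)`.
-/

open Finset Real

namespace Nat

def hyperbolaPoints (M : ℕ) : Finset (ℕ × ℕ) :=
  {p ∈ Icc 1 M ×ˢ Icc 1 M | p.1 * p.2 ≤ M}

lemma mem_hyperbolaPoints {M : ℕ} {p : ℕ × ℕ} :
    p ∈ hyperbolaPoints M ↔ 0 < p.1 ∧ 0 < p.2 ∧ p.1 * p.2 ≤ M := by
  simp only [hyperbolaPoints, mem_filter, mem_product, mem_Icc]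
  constructor
  · rintro ⟨⟨⟨h₁, -⟩, h₂, -⟩, h⟩
    exact ⟨h₁, h₂, h⟩
  · rintro ⟨h₁, h₂, h⟩
    exact ⟨⟨⟨h₁, (Nat.le_mul_of_pos_right _ h₂).trans h⟩, h₂,
      (Nat.le_mul_of_pos_left _ h₁).trans h⟩, h⟩

lemma card_hyperbolaPoints_filter_fst_le (M N : ℕ) :
    #{p ∈ hyperbolaPoints M | p.1 ≤ N} = ∑ a ∈ Icc 1 N, M / a := by
  rw [card_eq_sum_card_fiberwise (f := Prod.fst) (t := Icc 1 N)]
  · refine sum_congr rfl fun a ha => ?_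
    obtain ⟨ha, haN⟩ := mem_Icc.1 ha
    have hfiber :
        {p ∈ {p ∈ hyperbolaPoints M | p.1 ≤ N} | p.1 = a} = {a} ×ˢ Icc 1 (M / a) := by
      ext ⟨b, c⟩
      simp only [mem_filter, mem_hyperbolaPoints, mem_product, mem_singleton, mem_Icc,
        Nat.le_div_iff_mul_le ha]
      constructor
      · rintro ⟨⟨⟨-, hc, hbc⟩, -⟩, rfl⟩
        exact ⟨rfl, hc, by rwa [mul_comm]⟩
      · rintro ⟨rfl, hc, hcb⟩
        exact ⟨⟨⟨ha, hc, by rwa [mul_comm]⟩, haN⟩, rfl⟩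
    rw [hfiber, card_product, card_singleton, Nat.card_Icc, one_mul, Nat.add_sub_cancel]
  · intro p hp
    simp only [coe_filter, Set.mem_ofPred_eq, mem_hyperbolaPoints] at hp
    exact mem_Icc.2 ⟨hp.1.1, hp.2⟩

lemma card_hyperbolaPoints_filter_snd_le (M N : ℕ) :
    #{p ∈ hyperbolaPoints M | p.2 ≤ N} = ∑ a ∈ Icc 1 N, M / a := by
  rw [← card_hyperbolaPoints_filter_fst_le]
  refine card_nbij' Prod.swap Prod.swap ?_ ?_ (fun _ _ => rfl) (fun _ _ => rfl) <;>
  · intro p hp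
    simp only [coe_filter, Set.mem_ofPred_eq, mem_hyperbolaPoints, Prod.fst_swap,
      Prod.snd_swap] at hp ⊢
    exact ⟨⟨hp.1.2.1, hp.1.1, by rw [mul_comm]; exact hp.1.2.2⟩, hp.2⟩

lemma sum_card_divisors_eq_card_hyperbolaPoints (M : ℕ) :
    ∑ n ∈ Icc 1 M, #n.divisors = #(hyperbolaPoints M) := by
  have h := ArithmeticFunction.sum_Ioc_sigma0_eq_sum_div M
  simp only [ArithmeticFunction.sigma_zero_apply, ← Icc_add_one_left_eq_Ioc, zero_add] at h
  rw [h, ← card_hyperbolaPoints_filter_fst_le M M, filter_true_of_mem]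
  intro p hp
  obtain ⟨-, h₂, h⟩ := mem_hyperbolaPoints.1 hp
  exact (Nat.le_mul_of_pos_right _ h₂).trans h

theorem sum_card_divisors_add_sqrt_mul_sqrt (M : ℕ) :
    ∑ n ∈ Icc 1 M, #n.divisors + M.sqrt * M.sqrt = 2 * ∑ a ∈ Icc 1 M.sqrt, M / a := by
  set N := M.sqrt
  have hunion : {p ∈ hyperbolaPoints M | p.1 ≤ N} ∪ {p ∈ hyperbolaPoints M | p.2 ≤ N} =
      hyperbolaPoints M := by
    rw [← filter_or, filter_true_of_mem]
    intro p hp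
    by_contra! h
    exact (Nat.lt_succ_sqrt M).not_ge
      ((Nat.mul_le_mul h.1 h.2).trans (mem_hyperbolaPoints.1 hp).2.2)
  have hinter : {p ∈ hyperbolaPoints M | p.1 ≤ N} ∩ {p ∈ hyperbolaPoints M | p.2 ≤ N} =
      Icc 1 N ×ˢ Icc 1 N := by
    ext p
    simp only [mem_inter, mem_filter, mem_hyperbolaPoints, mem_product, mem_Icc]
    constructor
    · rintro ⟨⟨⟨h₁, h₂, -⟩, hN₁⟩, -, hN₂⟩
      exact ⟨⟨h₁, hN₁⟩, h₂, hN₂⟩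
    · rintro ⟨⟨h₁, hN₁⟩, h₂, hN₂⟩
      have := (Nat.mul_le_mul hN₁ hN₂).trans (Nat.sqrt_le M)
      exact ⟨⟨⟨h₁, h₂, this⟩, hN₁⟩, ⟨h₁, h₂, this⟩, hN₂⟩
  have h := card_union_add_card_inter {p ∈ hyperbolaPoints M | p.1 ≤ N}
    {p ∈ hyperbolaPoints M | p.2 ≤ N}
  rw [hunion, hinter, card_product, Nat.card_Icc, Nat.add_sub_cancel,
    card_hyperbolaPoints_filter_fst_le, card_hyperbolaPoints_filter_snd_le] at h
  rw [sum_card_divisors_eq_card_hyperbolaPoints]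
  omega

lemma floor_sqrt_eq_sqrt_floor (x : ℝ) : ⌊√x⌋₊ = Nat.sqrt ⌊x⌋₊ := by
  rcases lt_or_ge x 0 with hx | hx
  · simp [Real.sqrt_eq_zero'.2 hx.le, Nat.floor_eq_zero.2 (hx.trans one_pos)]
  rw [Nat.eq_sqrt]
  have hs : 0 ≤ √x := Real.sqrt_nonneg x
  constructor
  · refine Nat.le_floor ?_
    push_cast
    calc (⌊√x⌋₊ : ℝ) * ⌊√x⌋₊ ≤ √x * √x :=
          _root_.mul_self_le_mul_self (by positivity) (Nat.floor_le hs)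
      _ = x := Real.mul_self_sqrt hx
  · refine (Nat.floor_lt hx).2 ?_
    push_cast
    calc x = √x * √x := (Real.mul_self_sqrt hx).symm
      _ < (⌊√x⌋₊ + 1) * (⌊√x⌋₊ + 1) :=
        _root_.mul_self_lt_mul_self hs (Nat.lt_floor_add_one _)

end Nat

namespace Real

lemma log_sub_log_le_inv {s t : ℝ} (hs : 0 < s) (ht : 0 < t) (h : s ≤ t + 1) :
    log s - log t ≤ t⁻¹ := by
  rw [← log_div hs.ne' ht.ne']
  calc log (s / t) ≤ s / t - 1 := log_le_sub_one_of_pos (by positivity)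
    _ ≤ t⁻¹ := by
      rw [sub_le_iff_le_add, div_le_iff₀ ht, add_mul, inv_mul_cancel₀ ht.ne']
      linarith

lemma log_add_eulerMascheroniConstant_lt_harmonic {n : ℕ} (hn : n ≠ 0) :
    log n + eulerMascheroniConstant < harmonic n := by
  have h := eulerMascheroniConstant_lt_eulerMascheroniSeq' n
  rw [eulerMascheroniSeq', if_neg hn] at h
  linarith

lemma harmonic_le_log_add_eulerMascheroniConstant_add_inv (n : ℕ) :
    harmonic n ≤ log n + eulerMascheroniConstant + (n : ℝ)⁻¹ := by
  rcases Nat.eq_zero_or_pos n with rfl | hn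
  · simpa using one_half_lt_eulerMascheroniConstant.le.trans' (by norm_num)
  have h := eulerMascheroniSeq_lt_eulerMascheroniConstant n
  have hlog := log_sub_log_le_inv (s := n + 1) (by positivity) (by positivity) le_rfl
  rw [eulerMascheroniSeq] at h
  linarith

lemma mul_harmonic_eq_sum_div (x : ℝ) (N : ℕ) : x * harmonic N = ∑ a ∈ Icc 1 N, x / a := by
  simp only [harmonic_eq_sum_Icc, Rat.cast_sum, Rat.cast_inv, Rat.cast_natCast, mul_sum,
    div_eq_mul_inv]

lemma sum_floor_div_le_mul_harmonic {x : ℝ} (hx : 0 ≤ x) (N : ℕ) :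
    ∑ a ∈ Icc 1 N, (⌊x / a⌋₊ : ℝ) ≤ x * harmonic N := by
  rw [mul_harmonic_eq_sum_div]
  exact sum_le_sum fun a _ => Nat.floor_le (by positivity)

lemma mul_harmonic_sub_le_sum_floor_div (x : ℝ) (N : ℕ) :
    x * harmonic N - N ≤ ∑ a ∈ Icc 1 N, (⌊x / a⌋₊ : ℝ) := by
  have h : ∑ a ∈ Icc 1 N, (x / a - 1) ≤ ∑ a ∈ Icc 1 N, (⌊x / a⌋₊ : ℝ) :=
    sum_le_sum fun a _ => (Nat.sub_one_lt_floor _).le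
  rwa [sum_sub_distrib, sum_const, Nat.card_Icc, Nat.add_sub_cancel, nsmul_one,
    ← mul_harmonic_eq_sum_div] at h

end Real

theorem abs_sum_card_divisors_sub_le {x : ℝ} (hx : 1 ≤ x) :
    |∑ n ∈ Icc 1 ⌊x⌋₊, (#n.divisors : ℝ) - x * log x
        - (2 * eulerMascheroniConstant - 1) * x| ≤ 6 * √x := by
  have hx0 : 0 ≤ x := by linarith
  set s := √x
  set N := ⌊s⌋₊
  have hs : 1 ≤ s := Real.one_le_sqrt.2 hx
  have hxs : x = s * s := (Real.mul_self_sqrt hx0).symm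
  have hNs : (N : ℝ) ≤ s := Nat.floor_le (by linarith)
  have hsN : s < N + 1 := Nat.lt_floor_add_one s
  have hN : 0 < N := Nat.floor_pos.2 hs
  have hN₁ : (1 : ℝ) ≤ N := by exact_mod_cast hN
  have hsum : ∑ n ∈ Icc 1 ⌊x⌋₊, (#n.divisors : ℝ) =
      2 * ∑ a ∈ Icc 1 N, (⌊x / a⌋₊ : ℝ) - N * N := by
    have h := Nat.sum_card_divisors_add_sqrt_mul_sqrt ⌊x⌋₊
    rw [← Nat.floor_sqrt_eq_sqrt_floor] at h
    simp only [← Nat.floor_div_natCast] at h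
    rw [eq_sub_iff_add_eq]
    exact_mod_cast h
  have hlog : log x = 2 * log s := by rw [hxs, log_mul (by positivity) (by positivity)]; ring
  have hlogN : 0 ≤ log s - log N := sub_nonneg.2 (log_le_log (by positivity) hNs)
  have hlogN' : log s - log N ≤ (N : ℝ)⁻¹ :=
    log_sub_log_le_inv (by positivity) (by positivity) hsN.le
  have hH := log_add_eulerMascheroniConstant_lt_harmonic hN.ne'
  have hH' := harmonic_le_log_add_eulerMascheroniConstant_add_inv N
  have hT := mul_harmonic_sub_le_sum_floor_div x N
  have hT' := sum_floor_div_le_mul_harmonic hx0 N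
  have hxN : x * (N : ℝ)⁻¹ ≤ 2 * s := by
    rw [hxs, ← div_eq_mul_inv, div_le_iff₀ (by positivity)]
    nlinarith
  have hsq : 0 ≤ x - N * N := by nlinarith
  have hsq' : x - N * N ≤ 2 * s := by nlinarith
  rw [hsum, hlog, abs_le]
  constructor
  · linarith [mul_le_mul_of_nonneg_left hH.le hx0, mul_le_mul_of_nonneg_left hlogN' hx0]
  · linarith [mul_le_mul_of_nonneg_left hH' hx0, mul_nonneg hx0 hlogN]

/-- Dirichlet's divisor asymptotic:
`Σ_{n ≤ x} d(n) = x log x + (2γ - 1) x + O(√x)` as `x → ∞`. -/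
theorem dirichlet_divisor_asymptotic :
    ∃ C x₀ : ℝ, 0 < C ∧ 0 < x₀ ∧ ∀ x : ℝ, x₀ ≤ x →
      |(∑ n ∈ Finset.Icc 1 ⌊x⌋₊, ((Nat.divisors n).card : ℝ))
          - x * Real.log x - (2 * Real.eulerMascheroniConstant - 1) * x|
        ≤ C * Real.sqrt x :=
  ⟨6, 1, by norm_num, one_pos, fun _ hx => abs_sum_card_divisors_sub_le hx⟩
end

section
/- For the operator A = (−Δ)⊗(−Δ) on the torus S¹ × S¹, the nonzero eigenvalues are exactly the numbers n²m² with n,m positive integers, and the counting function satisfies N_A(λ²) = 4 Σ_{n ≤ λ} d(n) for λ > 0, where d is the divisor function. -/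
/-!
Since `n²m² ≤ λ²` iff `|nm| ≤ ⌊λ⌋`, the pairs are grouped by `k = |nm| ∈ [1, ⌊λ⌋]`. The pairs with
`nm = k` and those with `nm = -k` are the signed divisor pairs of `±k`, `2 d(k)` of each sign.
-/

open Finset

theorem Nat.card_divisorsAntidiagonal (n : ℕ) : #n.divisorsAntidiagonal = #n.divisors := by
  rw [← Nat.map_div_right_divisors, card_map]

namespace Int

theorem card_divisorsAntidiag (z : ℤ) : #z.divisorsAntidiag = 2 * #z.natAbs.divisors := by
  rcases natAbs_eq z with hz | hz <;> rw [hz]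
  · rw [divisorsAntidiag_natCast, card_disjUnion, card_map, card_map, natAbs_natCast,
      Nat.card_divisorsAntidiagonal, two_mul]
  · rw [divisorsAntidiag_neg_natCast, card_disjUnion, card_map, card_map, natAbs_neg,
      natAbs_natCast, Nat.card_divisorsAntidiagonal, two_mul]

theorem mem_divisorsAntidiag_union_neg {k : ℕ} {p : ℤ × ℤ} :
    p ∈ (k : ℤ).divisorsAntidiag ∪ (-k : ℤ).divisorsAntidiag ↔ (p.1 * p.2).natAbs = k ∧ k ≠ 0 := by
  simp only [mem_union, mem_divisorsAntidiag, natAbs_eq_iff]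
  omega

theorem card_divisorsAntidiag_union_neg (k : ℕ) :
    #((k : ℤ).divisorsAntidiag ∪ (-k : ℤ).divisorsAntidiag) = 4 * #k.divisors := by
  have hdisj : Disjoint (k : ℤ).divisorsAntidiag (-k : ℤ).divisorsAntidiag := by
    simp only [disjoint_left, mem_divisorsAntidiag]
    omega
  rw [card_union_of_disjoint hdisj, card_divisorsAntidiag, card_divisorsAntidiag, natAbs_neg,
    natAbs_natCast]
  ring

theorem ncard_natAbs_mul_mem_Icc (N : ℕ) :
    {p : ℤ × ℤ | (p.1 * p.2).natAbs ∈ Icc 1 N}.ncard = 4 * ∑ k ∈ Icc 1 N, #k.divisors := by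
  have hfibers : {p : ℤ × ℤ | (p.1 * p.2).natAbs ∈ Icc 1 N} =
      ↑((Icc 1 N).biUnion fun k : ℕ => (k : ℤ).divisorsAntidiag ∪ (-k : ℤ).divisorsAntidiag) := by
    ext p
    simp only [Set.mem_ofPred_eq, coe_biUnion, coe_Icc, Set.mem_Icc, Set.mem_iUnion, mem_coe,
      mem_divisorsAntidiag_union_neg]
    grind
  rw [hfibers, Set.ncard_coe_finset, card_biUnion, mul_sum]
  · exact sum_congr rfl fun k _ => card_divisorsAntidiag_union_neg k
  · intro k _ l _ hkl
    simp only [disjoint_left, mem_divisorsAntidiag_union_neg]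
    grind

theorem sq_le_sq_iff_natAbs_le_floor {α : Type*} [Field α] [LinearOrder α]
    [IsStrictOrderedRing α] [FloorSemiring α] {a : α} (ha : 0 ≤ a) (z : ℤ) :
    (z : α) ^ 2 ≤ a ^ 2 ↔ z.natAbs ≤ ⌊a⌋₊ := by
  rw [sq_le_sq, abs_of_nonneg ha, Nat.le_floor_iff ha, Nat.cast_natAbs, cast_abs]

end Int

/-- Counting function of `(−Δ)⊗(−Δ)` on the torus: the number of pairs of nonzero
integers `(n, m)` with `n² m² ≤ λ²` equals `4 Σ_{k ≤ λ} d(k)`. -/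
theorem counting_tensor_laplacian_eq_divisor_sum (lam : ℝ) (hlam : 0 < lam) :
    {p : ℤ × ℤ | p.1 ≠ 0 ∧ p.2 ≠ 0 ∧
        ((p.1 : ℝ) ^ 2 * (p.2 : ℝ) ^ 2 ≤ lam ^ 2)}.ncard
      = 4 * ∑ k ∈ Finset.Icc 1 ⌊lam⌋₊, (Nat.divisors k).card := by
  rw [← Int.ncard_natAbs_mul_mem_Icc]
  congr 1
  ext p
  rw [Set.mem_ofPred_eq, Set.mem_ofPred_eq, ← mul_pow, ← Int.cast_mul,
    Int.sq_le_sq_iff_natAbs_le_floor hlam.le, mem_Icc, Nat.one_le_iff_ne_zero, Int.natAbs_ne_zero,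
    mul_ne_zero_iff, and_assoc]
end

section
/- The function c ↦ γ_c (for c > 0) satisfies: γ_c → +∞ as c → 0⁺ and γ_c → −∞ as c → +∞. -/
/-!
For `c ≤ 1` every term `1 / √(c + i²)` is at least `1 / (i + 1)`, and the term `i = 0` is
`1 / √c`; so the partial sums exceed the harmonic numbers by `1 / √c - 1`, whence
`γ_c ≥ 1 / √c - 1`. For `c ≥ 1` the terms with `i ≤ √c` are at most `1 / √c` and
contribute at most `2`, while the later ones are at most `1 / i`; the harmonic sum from
`√c` to `τ` is `log τ - log √c + O(1)`, whence `γ_c ≤ 3 - (log c) / 2`.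
-/

open Filter Topology Finset Real

noncomputable def sqrtHarmonic (c : ℝ) (n : ℕ) : ℝ := ∑ i ∈ range (n + 1), 1 / √(c + i ^ 2)

lemma harmonic_add_inv_sqrt_sub_one_le_sqrtHarmonic {c : ℝ} (hc : 0 < c) (hc₁ : c ≤ 1)
    (n : ℕ) : harmonic (n + 1) + (1 / √c - 1) ≤ sqrtHarmonic c n := by
  have key (i : ℕ) : 1 / ((i : ℝ) + 1) ≤ 1 / √(c + i ^ 2) := by
    gcongr
    rw [sqrt_le_left (by positivity)]
    nlinarith [(i.cast_nonneg : (0 : ℝ) ≤ i)]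
  have hH : (harmonic (n + 1) : ℝ) = ∑ i ∈ range (n + 1), 1 / ((i : ℝ) + 1) := by
    simp [harmonic]
  rw [hH, ← le_sub_iff_add_le', sqrtHarmonic, ← sum_sub_distrib]
  simpa using single_le_sum (fun i _ => sub_nonneg.2 (key i)) (mem_range.2 n.succ_pos)

lemma sqrtHarmonic_le_two_add_harmonic_sub {c : ℝ} (hc : 1 ≤ c) {n : ℕ} (hn : ⌊√c⌋₊ ≤ n) :
    sqrtHarmonic c n ≤ 2 + (harmonic n - harmonic ⌊√c⌋₊) := by
  set m := ⌊√c⌋₊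
  have hsc : 1 ≤ √c := one_le_sqrt.2 hc
  have head : ∑ i ∈ range (m + 1), 1 / √(c + i ^ 2) ≤ 2 := calc
    _ ≤ ∑ i ∈ range (m + 1), 1 / √c := sum_le_sum fun i _ => by gcongr; simp
    _ = (m + 1) / √c := by simp [div_eq_mul_inv]
    _ ≤ 2 := by
      rw [div_le_iff₀ (by positivity)]
      linarith [Nat.floor_le (zero_le_one.trans hsc)]
  have tail : ∑ i ∈ Ico (m + 1) (n + 1), 1 / √(c + i ^ 2) ≤ harmonic n - harmonic m := calc
    _ = ∑ i ∈ Ico m n, 1 / √(c + ((i + 1 : ℕ) : ℝ) ^ 2) := (sum_Ico_add' ..).symm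
    _ ≤ ∑ i ∈ Ico m n, 1 / ((i + 1 : ℕ) : ℝ) := sum_le_sum fun i _ => by
      gcongr
      exact le_sqrt_of_sq_le (by linarith)
    _ = harmonic n - harmonic m := by simp [harmonic, sum_Ico_eq_sub _ hn]
  rw [sqrtHarmonic, ← sum_range_add_sum_Ico _ (by omega : m + 1 ≤ n + 1)]
  linarith

lemma inv_sqrt_sub_one_le_sqrtHarmonic_floor_sub_log {c τ : ℝ} (hc : 0 < c) (hc₁ : c ≤ 1)
    (hτ : 0 < τ) : 1 / √c - 1 ≤ sqrtHarmonic c ⌊τ⌋₊ - log τ := by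
  have hlog : log τ ≤ harmonic (⌊τ⌋₊ + 1) := calc
    log τ ≤ log ↑(⌊τ⌋₊ + 1 + 1) := by
      gcongr
      push_cast
      linarith [Nat.lt_floor_add_one τ]
    _ ≤ harmonic (⌊τ⌋₊ + 1) := log_add_one_le_harmonic _
  linarith [harmonic_add_inv_sqrt_sub_one_le_sqrtHarmonic hc hc₁ ⌊τ⌋₊]

lemma sqrtHarmonic_floor_sub_log_le {c τ : ℝ} (hc : 1 ≤ c) (hτ : √c ≤ τ) :
    sqrtHarmonic c ⌊τ⌋₊ - log τ ≤ 3 - log c / 2 := by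
  have hsc : 1 ≤ √c := one_le_sqrt.2 hc
  have hlog : log c / 2 ≤ harmonic ⌊√c⌋₊ := calc
    log c / 2 = log √c := by rw [log_sqrt (by positivity)]
    _ ≤ log ↑(⌊√c⌋₊ + 1) := by
      gcongr
      push_cast
      exact (Nat.lt_floor_add_one _).le
    _ ≤ harmonic ⌊√c⌋₊ := log_add_one_le_harmonic _
  linarith [sqrtHarmonic_le_two_add_harmonic_sub hc (Nat.floor_mono hτ),
    harmonic_floor_le_one_add_log τ (hsc.trans hτ)]

/-- The generalized Euler–Mascheroni constant `γ_c` tends to `+∞` as `c → 0⁺` and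
to `−∞` as `c → +∞`. -/
theorem generalized_eulerMascheroni_limits (γ : ℝ → ℝ)
    (hγ : ∀ c : ℝ, 0 < c → Tendsto
      (fun τ : ℝ =>
        (∑ i ∈ Finset.range (⌊τ⌋₊ + 1), 1 / Real.sqrt (c + (i : ℝ) ^ 2))
          - Real.log τ)
      atTop (𝓝 (γ c))) :
    Tendsto γ (𝓝[>] (0 : ℝ)) atTop ∧ Tendsto γ atTop atBot := by
  have lower (c : ℝ) (hc : c ∈ Set.Ioo 0 1) : 1 / √c - 1 ≤ γ c :=
    ge_of_tendsto (hγ c hc.1) <| (eventually_gt_atTop 0).mono fun _ hτ =>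
      inv_sqrt_sub_one_le_sqrtHarmonic_floor_sub_log hc.1 hc.2.le hτ
  have upper (c : ℝ) (hc : 1 ≤ c) : γ c ≤ 3 - log c / 2 :=
    le_of_tendsto (hγ c (by linarith)) <| (eventually_ge_atTop √c).mono fun _ hτ =>
      sqrtHarmonic_floor_sub_log_le hc hτ
  constructor
  · refine tendsto_atTop_mono' _ (mem_of_superset (Ioo_mem_nhdsGT one_pos) lower) ?_
    have hrpow : Tendsto (fun c : ℝ => c ^ (-(1 / 2) : ℝ)) (𝓝[>] 0) atTop :=
      tendsto_rpow_neg_nhdsGT_zero (by norm_num)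
    refine tendsto_atTop_add_const_right _ (-1) (hrpow.congr' ?_)
    filter_upwards [self_mem_nhdsWithin] with c hc
    rw [rpow_neg hc.out.le, ← sqrt_eq_rpow, one_div]
  · refine tendsto_atBot_mono' _ ((eventually_ge_atTop 1).mono upper) ?_
    exact tendsto_atBot_add_const_left _ 3
      (tendsto_neg_atTop_atBot.comp (tendsto_log_atTop.atTop_div_const two_pos))
end
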